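/- Let A be a real symmetric n×n matrix and θ₃ a real antisymmetric n×n matrix. For i, j = 1,…,n define operators on smooth functions f : ℝⁿ → ℂ by ∇_i f := ∂f/∂x_i − π√-1 ((A θ₃ A) x)_i · f and ∇_{n+j} f := −2π√-1 (A x)_j · f. Then for all p, q ∈ {1,…,2n} and all smooth f, [∇_p, ∇_q] f = −2π√-1 F_{pq} f, where F is the 2n×2n block matrix F = [[−A θ₃ A, A],[−A, 0]]. -/

import Mathlib

open Matrix


noncomputable def mvC {n : ℕ} (M : Matrix (Fin n) (Fin n) ℝ) (j : Fin n) :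
    (Fin n → ℝ) →L[ℝ] ℂ :=
  Complex.ofRealCLM.comp (LinearMap.toContinuousLinearMap
    ((LinearMap.proj j).comp M.mulVecLin))

lemma mvC_apply {n : ℕ} (M : Matrix (Fin n) (Fin n) ℝ) (j : Fin n) (x : Fin n → ℝ) :
    mvC M j x = (((M.mulVec x) j : ℝ) : ℂ) := rfl

lemma mv_diff {n : ℕ} (M : Matrix (Fin n) (Fin n) ℝ) (j : Fin n) (x : Fin n → ℝ) :
    DifferentiableAt ℝ (fun y => (((M.mulVec y) j : ℝ) : ℂ)) x :=
  (mvC M j).hasFDerivAt.differentiableAt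

lemma fderiv_mv_mul {n : ℕ} (M : Matrix (Fin n) (Fin n) ℝ) (j : Fin n)
    {f : (Fin n → ℝ) → ℂ} {x : Fin n → ℝ} (hf : DifferentiableAt ℝ f x)
    (v : Fin n → ℝ) :
    fderiv ℝ (fun y => (((M.mulVec y) j : ℝ) : ℂ) * f y) x v
      = (((M.mulVec v) j : ℝ) : ℂ) * f x + (((M.mulVec x) j : ℝ) : ℂ) * fderiv ℝ f x v := by
  have h1 : HasFDerivAt (fun y => (((M.mulVec y) j : ℝ) : ℂ)) (mvC M j) x :=
    (mvC M j).hasFDerivAt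
  have h2 := h1.mul hf.hasFDerivAt
  rw [HasFDerivAt.fderiv (f := fun y => (((M.mulVec y) j : ℝ) : ℂ) * f y) h2]
  simp [mvC_apply, mul_comm, smul_eq_mul]
  ring

lemma snd_symm {n : ℕ} {f : (Fin n → ℝ) → ℂ} (hf : ContDiff ℝ (⊤ : ℕ∞) f)
    (x v w : Fin n → ℝ) :
    fderiv ℝ (fun y => fderiv ℝ f y v) x w = fderiv ℝ (fun y => fderiv ℝ f y w) x v := by
  have hd : DifferentiableAt ℝ (fderiv ℝ f) x :=
    ((hf.fderiv_right (m := 1) (WithTop.coe_le_coe.mpr le_top)).differentiable one_ne_zero).differentiableAt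
  have e1 := fderiv_clm_apply (c := fderiv ℝ f) (u := fun _ => v) hd (differentiableAt_const v)
  have e2 := fderiv_clm_apply (c := fderiv ℝ f) (u := fun _ => w) hd (differentiableAt_const w)
  have hs : IsSymmSndFDerivAt ℝ f x := hf.contDiffAt.isSymmSndFDerivAt (by rw [minSmoothness_of_isRCLikeNormedField]; exact WithTop.coe_le_coe.mpr le_top)
  have := hs v w
  simp [e1, e2, fderiv_fun_const, this]

-- fderiv of (const * mv * f)
lemma fderiv_cmv_mul {n : ℕ} (M : Matrix (Fin n) (Fin n) ℝ) (j : Fin n) (c : ℂ)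
    {f : (Fin n → ℝ) → ℂ} {x : Fin n → ℝ} (hf : DifferentiableAt ℝ f x)
    (v : Fin n → ℝ) :
    fderiv ℝ (fun y => c * (((M.mulVec y) j : ℝ) : ℂ) * f y) x v
      = c * ((((M.mulVec v) j : ℝ) : ℂ) * f x + (((M.mulVec x) j : ℝ) : ℂ) * fderiv ℝ f x v) := by
  have hmul : DifferentiableAt ℝ (fun y => (((M.mulVec y) j : ℝ) : ℂ) * f y) x :=
    (mv_diff M j x).mul hf
  have : (fun y => c * (((M.mulVec y) j : ℝ) : ℂ) * f y)
      = fun y => c * ((((M.mulVec y) j : ℝ) : ℂ) * f y) := by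
    funext y; ring
  rw [this, fderiv_const_mul hmul c]
  simp [fderiv_mv_mul M j hf v]


/-- The connection components of the Type θ₃ Heisenberg module, acting on the
ℝⁿ-variable of the module: `∇_i = ∂/∂x_i − π i ((A θ₃ A) x)_i ·` and
`∇_{n+j} = −2π i (A x)_j ·`. -/
noncomputable def connTheta3 {n : ℕ} (A θ₃ : Matrix (Fin n) (Fin n) ℝ) :
    Fin n ⊕ Fin n → ((Fin n → ℝ) → ℂ) → ((Fin n → ℝ) → ℂ)
  | Sum.inl i => fun f x => fderiv ℝ f x (Pi.single i 1)
      - (Real.pi : ℂ) * Complex.I * ((((A * θ₃ * A).mulVec x) i : ℝ) : ℂ) * f x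
  | Sum.inr j => fun f x =>
      -2 * (Real.pi : ℂ) * Complex.I * (((A.mulVec x) j : ℝ) : ℂ) * f x

/-- The connection of the Type θ₃ Heisenberg module has constant
curvature `[∇_p, ∇_q] = −2π i F_{pq}` with `F = [[−A θ₃ A, A],[−A, 0]]`. -/
theorem typeTheta3_constant_curvature {n : ℕ} (A θ₃ : Matrix (Fin n) (Fin n) ℝ)
    (hA : A.IsSymm) (hθ : θ₃ᵀ = -θ₃)
    (F : Matrix (Fin n ⊕ Fin n) (Fin n ⊕ Fin n) ℝ)
    (hF : F = fromBlocks (-(A * θ₃ * A)) A (-A) 0) :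
    ∀ (p q : Fin n ⊕ Fin n) (f : (Fin n → ℝ) → ℂ), ContDiff ℝ (⊤ : ℕ∞) f →
      ∀ x : Fin n → ℝ,
        connTheta3 A θ₃ p (connTheta3 A θ₃ q f) x
          - connTheta3 A θ₃ q (connTheta3 A θ₃ p f) x
        = -2 * (Real.pi : ℂ) * Complex.I * ((F p q : ℝ) : ℂ) * f x := by
  set M := A * θ₃ * A with hM
  have hMt : Mᵀ = -M := by
    rw [hM, Matrix.transpose_mul, Matrix.transpose_mul, hA.eq, hθ]
    simp [Matrix.mul_assoc]
  have hMskew : ∀ i j, M j i = -M i j := fun i j => by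
    have := congrFun (congrFun hMt i) j
    simpa [Matrix.transpose_apply] using this
  have hAsym : ∀ i j, A j i = A i j := fun i j => by
    have := congrFun (congrFun hA.eq i) j
    simpa [Matrix.transpose_apply] using this
  intro p q f hf x
  have hfd : ∀ y, DifferentiableAt ℝ f y := fun y =>
    (hf.differentiable (by simp)).differentiableAt
  -- differentiability of fderiv f applied to a fixed vector
  have hDf : ∀ (v : Fin n → ℝ) (y : Fin n → ℝ),
      DifferentiableAt ℝ (fun z => fderiv ℝ f z v) y := fun v y =>
    (((hf.fderiv_right (m := 1) (WithTop.coe_le_coe.mpr le_top)).differentiable one_ne_zero).differentiableAt).clm_apply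
      (differentiableAt_const v)
  -- fderiv of connTheta3 inl j f
  have key_inl : ∀ (i j : Fin n) (y : Fin n → ℝ),
      fderiv ℝ (connTheta3 A θ₃ (Sum.inl j) f) y (Pi.single i 1)
        = fderiv ℝ (fun z => fderiv ℝ f z (Pi.single j 1)) y (Pi.single i 1)
          - (Real.pi : ℂ) * Complex.I *
            (((M j i : ℝ) : ℂ) * f y + (((M.mulVec y) j : ℝ) : ℂ)
              * fderiv ℝ f y (Pi.single i 1)) := by
    intro i j y
    have hsub : DifferentiableAt ℝ
        (fun z => (Real.pi : ℂ) * Complex.I * (((M.mulVec z) j : ℝ) : ℂ) * f z) y :=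
      (((differentiableAt_const _).mul (mv_diff M j y)).mul (hfd y))
    have : connTheta3 A θ₃ (Sum.inl j) f
        = fun z => fderiv ℝ f z (Pi.single j 1)
          - (Real.pi : ℂ) * Complex.I * (((M.mulVec z) j : ℝ) : ℂ) * f z := rfl
    rw [this, fderiv_fun_sub (hDf _ y) hsub]
    have h2 := fderiv_cmv_mul M j ((Real.pi : ℂ) * Complex.I) (hfd y) (Pi.single i 1)
    simp only [ContinuousLinearMap.coe_sub', Pi.sub_apply]
    rw [h2]
    have hms : M.mulVec (Pi.single i 1) j = M j i := by
      simp [Matrix.mulVec_single]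
    rw [hms]
  have key_inr : ∀ (i j : Fin n) (y : Fin n → ℝ),
      fderiv ℝ (connTheta3 A θ₃ (Sum.inr j) f) y (Pi.single i 1)
        = -2 * (Real.pi : ℂ) * Complex.I *
            (((A j i : ℝ) : ℂ) * f y + (((A.mulVec y) j : ℝ) : ℂ)
              * fderiv ℝ f y (Pi.single i 1)) := by
    intro i j y
    have : connTheta3 A θ₃ (Sum.inr j) f
        = fun z => (-2 * (Real.pi : ℂ) * Complex.I) * (((A.mulVec z) j : ℝ) : ℂ) * f z := rfl
    rw [this]
    have h2 := fderiv_cmv_mul A j (-2 * (Real.pi : ℂ) * Complex.I) (hfd y) (Pi.single i 1)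
    rw [h2]
    have hms : A.mulVec (Pi.single i 1) j = A j i := by
      simp [Matrix.mulVec_single]
    rw [hms]
  subst hF
  cases p with
  | inl i =>
    cases q with
    | inl j =>
      have e1 : connTheta3 A θ₃ (Sum.inl i) (connTheta3 A θ₃ (Sum.inl j) f) x
          = fderiv ℝ (connTheta3 A θ₃ (Sum.inl j) f) x (Pi.single i 1)
            - (Real.pi : ℂ) * Complex.I * (((M.mulVec x) i : ℝ) : ℂ)
              * connTheta3 A θ₃ (Sum.inl j) f x := rfl
      have e2 : connTheta3 A θ₃ (Sum.inl j) (connTheta3 A θ₃ (Sum.inl i) f) x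
          = fderiv ℝ (connTheta3 A θ₃ (Sum.inl i) f) x (Pi.single j 1)
            - (Real.pi : ℂ) * Complex.I * (((M.mulVec x) j : ℝ) : ℂ)
              * connTheta3 A θ₃ (Sum.inl i) f x := rfl
      rw [e1, e2, key_inl i j x, key_inl j i x,
        snd_symm hf x (Pi.single j 1) (Pi.single i 1)]
      simp only [connTheta3, ← hM, fromBlocks_apply₁₁, Matrix.neg_apply]
      rw [hMskew i j]
      push_cast
      ring
    | inr j =>
      have e1 : connTheta3 A θ₃ (Sum.inl i) (connTheta3 A θ₃ (Sum.inr j) f) x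
          = fderiv ℝ (connTheta3 A θ₃ (Sum.inr j) f) x (Pi.single i 1)
            - (Real.pi : ℂ) * Complex.I * (((M.mulVec x) i : ℝ) : ℂ)
              * connTheta3 A θ₃ (Sum.inr j) f x := rfl
      have e2 : connTheta3 A θ₃ (Sum.inr j) (connTheta3 A θ₃ (Sum.inl i) f) x
          = -2 * (Real.pi : ℂ) * Complex.I * (((A.mulVec x) j : ℝ) : ℂ)
              * connTheta3 A θ₃ (Sum.inl i) f x := rfl
      rw [e1, e2, key_inr i j x]
      simp only [connTheta3, ← hM, fromBlocks_apply₁₂]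
      rw [hAsym i j]
      ring
  | inr i =>
    cases q with
    | inl j =>
      have e1 : connTheta3 A θ₃ (Sum.inr i) (connTheta3 A θ₃ (Sum.inl j) f) x
          = -2 * (Real.pi : ℂ) * Complex.I * (((A.mulVec x) i : ℝ) : ℂ)
              * connTheta3 A θ₃ (Sum.inl j) f x := rfl
      have e2 : connTheta3 A θ₃ (Sum.inl j) (connTheta3 A θ₃ (Sum.inr i) f) x
          = fderiv ℝ (connTheta3 A θ₃ (Sum.inr i) f) x (Pi.single j 1)
            - (Real.pi : ℂ) * Complex.I * (((M.mulVec x) j : ℝ) : ℂ)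
              * connTheta3 A θ₃ (Sum.inr i) f x := rfl
      rw [e1, e2, key_inr j i x]
      simp only [connTheta3, ← hM, fromBlocks_apply₂₁, Matrix.neg_apply]
      push_cast
      ring
    | inr j =>
      simp only [connTheta3, fromBlocks_apply₂₂, Matrix.zero_apply]
      push_cast
      ring
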